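/- arXiv:1710.01782 — 2 statements merged into one kernel-verified Lean document; each statement's English description precedes it below -/
import Mathlib

section
/- If ⟨v,u⟩ is a critical pair of a network (G,α) (with associated vertices v₁, v₂, u' as in the definition), then for every shortest path tree T of G rooted at u, either the edge (v,v₁) is not an edge of T or v₁ is the parent of v in T. Furthermore, if ⟨v,u⟩ is a strong critical pair, then there exists a shortest path tree of G rooted at u that does not contain the edge (v,v₂). -/
open scoped BigOperators

namespace NCG

variable {V : Type*} [Fintype V] [DecidableEq V]

/-- The network induced by a strategy vector `st`: `{u,v}` is an edge iff (at least)
one of the endpoints buys it, i.e. `v ∈ st u` or `u ∈ st v`. -/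
def graph (st : V → Finset V) : SimpleGraph V where
  Adj u v := u ≠ v ∧ (v ∈ st u ∨ u ∈ st v)
  symm := ⟨fun u v h => ⟨h.1.symm, h.2.symm⟩⟩
  loopless := ⟨fun u h => h.1 rfl⟩

open scoped Classical in
/-- The distance cost of agent `u`: the sum of the graph distances to all nodes if the
network is connected, and `⊤` otherwise. -/
noncomputable def distcost (st : V → Finset V) (u : V) : EReal :=
  if (graph st).Connected then (((∑ w : V, ((graph st).dist u w : ℝ)) : ℝ) : EReal) else ⊤

/-- The cost of agent `u`: `α` per bought edge plus the distance cost. -/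
noncomputable def cost (α : ℝ) (st : V → Finset V) (u : V) : EReal :=
  ((α * (st u).card : ℝ) : EReal) + distcost st u

/-- A network is stable (a pure Nash equilibrium) if no agent `u` can strictly
decrease her cost by unilaterally changing her own strategy set `st u`. -/
def Stable (α : ℝ) (st : V → Finset V) : Prop :=
  ∀ u : V, ∀ t : Finset V, u ∉ t → cost α st u ≤ cost α (Function.update st u t) u

/-- The social cost of a network: the sum of the costs of all agents. -/
noncomputable def socialCost (α : ℝ) (st : V → Finset V) : EReal :=
  ∑ u : V, cost α st u

/-- The optimal (minimum) social cost over all strategy vectors on agent set `W`. -/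
noncomputable def optCost (α : ℝ) (W : Type*) [Fintype W] [DecidableEq W] : EReal :=
  sInf {c : EReal | ∃ st : W → Finset W, (∀ u, u ∉ st u) ∧ c = socialCost α st}

/-- `T` is a shortest path tree of `G` rooted at `r`: a spanning tree of `G`
preserving all distances from `r`. -/
def IsSPT (G : SimpleGraph V) (r : V) (T : SimpleGraph V) : Prop :=
  T ≤ G ∧ T.IsTree ∧ ∀ x, T.dist r x = G.dist r x

/-- The subgraph of `G` induced on `S` is biconnected: it has at least 3 vertices,
it is connected, and it has no cut vertex. -/
def IsBiconnectedOn (G : SimpleGraph V) (S : Set V) : Prop :=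
  3 ≤ S.ncard ∧ (G.induce S).Connected ∧ ∀ x ∈ S, (G.induce (S \ {x})).Connected

/-- `S` induces a biconnected component of `G`: a maximal biconnected induced subgraph. -/
def IsBiconnectedComponent (G : SimpleGraph V) (S : Set V) : Prop :=
  IsBiconnectedOn G S ∧ ∀ S' : Set V, S ⊆ S' → IsBiconnectedOn G S' → S' = S

/-- `⟨v,u⟩` is a critical pair (with witnesses `v₁, v₂, u'` and biconnected component `H`)
of the network induced by the strategy vector `st`:
(1) `v ∈ H` buys the two distinct non-bridge edges `(v,v₁)` and `(v,v₂)` with `v₁,v₂ ∈ H`;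
(2) `u ∈ H`, `u ≠ v`, buys an edge `(u,u')` with `u' ∈ H`, `u' ≠ v`;
(3) `d(v,u) ≥ 2`;
(4) some shortest path from `v` to `u` uses the edge `(v,v₁)`;
(5) some shortest path from `v` to `u'` does not use the edge `(u,u')`. -/
def IsCriticalPair (st : V → Finset V) (H : Set V) (v u v₁ v₂ u' : V) : Prop :=
  IsBiconnectedComponent (graph st) H ∧
  v ∈ H ∧ v₁ ∈ H ∧ v₂ ∈ H ∧ v₁ ≠ v₂ ∧
  v₁ ∈ st v ∧ v₂ ∈ st v ∧
  ¬ (graph st).IsBridge (s(v, v₁)) ∧ ¬ (graph st).IsBridge (s(v, v₂)) ∧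
  u ∈ H ∧ u ≠ v ∧ u' ∈ H ∧ u' ≠ v ∧ u' ∈ st u ∧
  2 ≤ (graph st).dist v u ∧
  (∃ p : (graph st).Walk v u, p.IsPath ∧ p.length = (graph st).dist v u ∧
    s(v, v₁) ∈ p.edges) ∧
  (∃ p : (graph st).Walk v u', p.IsPath ∧ p.length = (graph st).dist v u' ∧
    s(u, u') ∉ p.edges)

/-- A critical pair is strong if moreover some shortest path from `u` to `v₂`
does not use the edge `(v,v₂)`. -/
def IsStrongCriticalPair (st : V → Finset V) (H : Set V) (v u v₁ v₂ u' : V) : Prop :=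
  IsCriticalPair st H v u v₁ v₂ u' ∧
  ∃ p : (graph st).Walk u v₂, p.IsPath ∧ p.length = (graph st).dist u v₂ ∧
    s(v, v₂) ∉ p.edges

/-- A cycle `c` in `G` is a min cycle if for every two vertices on the cycle, their
distance along the cycle equals their distance in `G`. -/
def IsMinCycle (G : SimpleGraph V) {a : V} (c : G.Walk a a) : Prop :=
  c.IsCycle ∧ ∀ (x : V) (hx : x ∈ c.toSubgraph.verts) (y : V) (hy : y ∈ c.toSubgraph.verts),
    c.toSubgraph.coe.dist ⟨x, hx⟩ ⟨y, hy⟩ = G.dist x y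

/-- A cycle `c` of the network induced by `st` is directed if, traversed in one of the
two possible directions, every edge of the cycle is bought by its tail vertex. -/
def IsDirectedCycle (st : V → Finset V) {a : V} (c : (graph st).Walk a a) : Prop :=
  c.IsCycle ∧
    ((∀ i < c.length, c.getVert (i + 1) ∈ st (c.getVert i)) ∨
     (∀ i < c.length, c.getVert i ∈ st (c.getVert (i + 1))))

/-- `c` is a centroid of (the subgraph of `G` induced on) `S`: every connected component
obtained from `S` by removing `c` contains at most `|S|/2` vertices. -/
def IsCentroidOn (G : SimpleGraph V) (S : Set V) (c : V) : Prop :=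
  c ∈ S ∧ ∀ x ∈ S, x ≠ c →
    2 * {y | y ∈ S ∧ ∃ p : G.Walk x y, c ∉ p.support ∧ ∀ z ∈ p.support, z ∈ S}.ncard
      ≤ S.ncard

end NCG

/-! In a shortest path tree rooted at `u` tree distances are graph distances, and a shortest
`v`–`u` path through the edge `(v,v₁)` gives `d(u,v₁) + 1 = d(u,v)`. For a strong pair, let every
`x ≠ u` choose a neighbour one step closer to `u`, namely `v₁` for `v` and, for `v₂`, the next
vertex on a shortest `v₂`–`u` path avoiding `(v,v₂)`: the edges `{x, par x}` then form a shortest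
path tree rooted at `u` that does not contain `(v,v₂)`. -/

open SimpleGraph

namespace SimpleGraph

variable {V : Type*} {G : SimpleGraph V}

theorem Walk.dist_add_one_of_length_eq_dist_of_mem_edges {a b w : V} (p : G.Walk a b)
    (hp : p.length = G.dist a b) (he : s(a, w) ∈ p.edges) :
    G.dist b w + 1 = G.dist b a := by
  have hpath := p.isPath_of_length_eq_dist hp
  cases p with
  | nil => simp at he
  | @cons _ c _ h q =>
    have hwc : w = c := by
      rcases List.mem_cons.mp (Walk.edges_cons h q ▸ he) with he | he
      · exact Sym2.congr_right.mp he
      · exact absurd (q.fst_mem_support_of_mem_edges he) (Walk.cons_isPath_iff h q |>.mp hpath).2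
    subst hwc
    have hq : G.dist w b ≤ q.length := dist_le q
    have htri : G.dist a b ≤ G.dist a w + G.dist w b := h.reachable.dist_triangle_left b
    rw [dist_eq_one_iff_adj.mpr h] at htri
    rw [Walk.length_cons] at hp
    rw [dist_comm, dist_comm (u := b)]
    omega

theorem Walk.exists_adj_dist_add_one {x u : V} (p : G.Walk x u) (hp : p.length = G.dist x u)
    (hx : x ≠ u) : ∃ y, s(x, y) ∈ p.edges ∧ G.Adj x y ∧ G.dist u y + 1 = G.dist u x := by
  cases p with
  | nil => exact absurd rfl hx
  | @cons _ c _ h q =>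
    have he : s(x, c) ∈ (Walk.cons h q).edges := by simp
    exact ⟨c, he, h, Walk.dist_add_one_of_length_eq_dist_of_mem_edges _ hp he⟩

end SimpleGraph

namespace NCG

variable {V : Type*} {G : SimpleGraph V} {u : V} {par : V → V}

def IsParentMap (G : SimpleGraph V) (u : V) (par : V → V) : Prop :=
  ∀ x ≠ u, G.Adj x (par x) ∧ G.dist u (par x) + 1 = G.dist u x

def parentGraph (u : V) (par : V → V) : SimpleGraph V :=
  fromRel fun a b => a ≠ u ∧ par a = b

theorem parentGraph_adj {a b : V} :
    (parentGraph u par).Adj a b ↔ a ≠ b ∧ ((a ≠ u ∧ par a = b) ∨ (b ≠ u ∧ par b = a)) :=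
  fromRel_adj _ a b

theorem exists_isParentMap (hG : G.Connected) (u : V) : ∃ par, IsParentMap G u par := by
  have h : ∀ x ≠ u, ∃ y, G.Adj x y ∧ G.dist u y + 1 = G.dist u x := fun x hx => by
    obtain ⟨p, hp⟩ := hG.exists_walk_length_eq_dist x u
    obtain ⟨y, -, hy⟩ := p.exists_adj_dist_add_one hp hx
    exact ⟨y, hy⟩
  choose! par hpar using h
  exact ⟨par, hpar⟩

theorem IsParentMap.update [DecidableEq V] (hpar : IsParentMap G u par) {x y : V}
    (hxy : G.Adj x y ∧ G.dist u y + 1 = G.dist u x) :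
    IsParentMap G u (Function.update par x y) := by
  intro z hz
  rcases eq_or_ne z x with rfl | hzx
  · simpa using hxy
  · simpa [hzx] using hpar z hz

theorem IsParentMap.parentGraph_le (hpar : IsParentMap G u par) : parentGraph u par ≤ G := by
  intro a b hab
  rcases parentGraph_adj.mp hab with ⟨-, ⟨ha, rfl⟩ | ⟨hb, rfl⟩⟩
  · exact (hpar a ha).1
  · exact (hpar b hb).1.symm

theorem IsParentMap.exists_walk_parentGraph (hpar : IsParentMap G u par) (x : V) :
    ∃ w : (parentGraph u par).Walk u x, w.length = G.dist u x := by
  induction hn : G.dist u x using Nat.strong_induction_on generalizing x with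
  | _ n ih =>
    rcases eq_or_ne x u with rfl | hx
    · exact ⟨.nil, by simp [← hn]⟩
    obtain ⟨hadj, hdist⟩ := hpar x hx
    obtain ⟨w, hw⟩ := ih _ (by omega) (par x) rfl
    have hT : (parentGraph u par).Adj (par x) x :=
      parentGraph_adj.mpr ⟨hadj.ne.symm, Or.inr ⟨hx, rfl⟩⟩
    exact ⟨w.concat hT, by rw [Walk.length_concat, hw]; omega⟩

/-- A cycle would have a vertex `x` of maximal rank with two distinct cycle-neighbours of rank
at most its own; both would have to be `par x`. -/
theorem parentGraph_isAcyclic (ℓ : V → ℕ) (hℓ : ∀ x ≠ u, ℓ (par x) < ℓ x) :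
    (parentGraph u par).IsAcyclic := by
  have hkey : ∀ a b, (parentGraph u par).Adj a b → ℓ b ≤ ℓ a → par a = b := by
    intro a b hab hle
    rcases parentGraph_adj.mp hab with ⟨-, ⟨-, h⟩ | ⟨hb, rfl⟩⟩
    · exact h
    · exact absurd (hℓ b hb) (not_lt.mpr hle)
  intro a c hc
  classical
  obtain ⟨x, hx, hmax⟩ := c.support.toFinset.exists_max_image ℓ ⟨a, by simp⟩
  rw [List.mem_toFinset] at hx
  set c' := c.rotate x hx
  have hc' : c'.IsCycle := hc.rotate hx
  have hle : ∀ y ∈ c'.support, ℓ y ≤ ℓ x := fun y hy =>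
    hmax y (List.mem_toFinset.mpr ((c.mem_support_rotate_iff x hx).mp hy))
  have hsnd := hkey _ _ (c'.adj_snd hc'.not_nil) (hle _ (c'.getVert_mem_support 1))
  have hpen := hkey _ _ (c'.adj_penultimate hc'.not_nil).symm
    (hle _ (c'.getVert_mem_support _))
  exact hc'.snd_ne_penultimate (hsnd.symm.trans hpen)

theorem IsParentMap.isSPT (hpar : IsParentMap G u par) : IsSPT G u (parentGraph u par) := by
  have hle := hpar.parentGraph_le
  have hreach : ∀ x, (parentGraph u par).Reachable u x := fun x =>
    ⟨(hpar.exists_walk_parentGraph x).choose⟩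
  have hdist : ∀ x, (parentGraph u par).dist u x = G.dist u x := fun x => by
    obtain ⟨w, hw⟩ := hpar.exists_walk_parentGraph x
    exact le_antisymm (hw ▸ dist_le w) ((hreach x).dist_anti hle)
  refine ⟨hle, ⟨?_, parentGraph_isAcyclic (G.dist u) fun x hx => ?_⟩, hdist⟩
  · have : Nonempty V := ⟨u⟩
    exact ⟨fun a b => (hreach a).symm.trans (hreach b)⟩
  · have := (hpar x hx).2
    omega

theorem exists_isSPT_not_adj (hG : G.Connected) {a b a' b' : V}
    (ha : G.Adj a a' ∧ G.dist u a' + 1 = G.dist u a)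
    (hb : G.Adj b b' ∧ G.dist u b' + 1 = G.dist u b) (ha' : a' ≠ b) (hb' : b' ≠ a) :
    ∃ T, IsSPT G u T ∧ ¬ T.Adj a b := by
  classical
  obtain ⟨par, hpar⟩ := exists_isParentMap hG u
  refine ⟨_, ((hpar.update ha).update hb).isSPT, ?_⟩
  rintro hab
  obtain ⟨hne, ⟨-, h⟩ | ⟨-, h⟩⟩ := parentGraph_adj.mp hab
  · exact ha' (by simpa [hne] using h)
  · exact hb' (by simpa using h)

end NCG

theorem critical_pair_spt_rooted_at_u_general {V : Type*}
    (st : V → Finset V) (hself : ∀ u, u ∉ st u)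
    (hconn : (NCG.graph st).Connected)
    (H : Set V) (v u v₁ v₂ u' : V)
    (hcp : NCG.IsCriticalPair st H v u v₁ v₂ u') :
    (∀ T : SimpleGraph V, NCG.IsSPT (NCG.graph st) u T →
      (¬ T.Adj v v₁ ∨ (T.Adj v v₁ ∧ T.dist u v₁ + 1 = T.dist u v))) ∧
    (NCG.IsStrongCriticalPair st H v u v₁ v₂ u' →
      ∃ T : SimpleGraph V, NCG.IsSPT (NCG.graph st) u T ∧ ¬ T.Adj v v₂) := by
  obtain ⟨-, -, -, -, hv₁v₂, -, hv₂st, -, -, -, -, -, -, -, hvu, ⟨p, -, hp, hpv₁⟩, -⟩ := hcp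
  have hv₁ : (NCG.graph st).Adj v v₁ ∧ (NCG.graph st).dist u v₁ + 1 = (NCG.graph st).dist u v :=
    ⟨p.adj_of_mem_edges hpv₁, p.dist_add_one_of_length_eq_dist_of_mem_edges hp hpv₁⟩
  refine ⟨fun T hT => ?_, ?_⟩
  · by_cases hT₁ : T.Adj v v₁
    · exact Or.inr ⟨hT₁, by rw [hT.2.2, hT.2.2]; exact hv₁.2⟩
    · exact Or.inl hT₁
  · rintro ⟨-, q, -, hq, hqv₂⟩
    have hvv₂ : (NCG.graph st).Adj v v₂ := ⟨fun h => hself v (h ▸ hv₂st), Or.inl hv₂st⟩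
    have hv₂u : v₂ ≠ u := by
      rintro rfl
      rw [dist_eq_one_iff_adj.mpr hvv₂] at hvu
      omega
    obtain ⟨y, hy, hv₂y⟩ := q.reverse.exists_adj_dist_add_one
      (by rw [Walk.length_reverse, hq, dist_comm]) hv₂u
    refine NCG.exists_isSPT_not_adj hconn hv₁ hv₂y hv₁v₂ ?_
    rintro rfl
    exact hqv₂ (by simpa [Sym2.eq_swap] using hy)

/-- If `⟨v,u⟩` is a critical pair of a (connected) network, then in every
shortest path tree `T` rooted at `u` either the edge `(v,v₁)` does not occur or `v₁` is the
parent of `v`; and if the pair is strong, some shortest path tree rooted at `u` avoids the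
edge `(v,v₂)`. -/
theorem critical_pair_spt_rooted_at_u {V : Type*} [Fintype V] [DecidableEq V]
    (α : ℝ) (st : V → Finset V) (hself : ∀ u, u ∉ st u)
    (hconn : (NCG.graph st).Connected)
    (H : Set V) (v u v₁ v₂ u' : V)
    (hcp : NCG.IsCriticalPair st H v u v₁ v₂ u') :
    (∀ T : SimpleGraph V, NCG.IsSPT (NCG.graph st) u T →
      (¬ T.Adj v v₁ ∨ (T.Adj v v₁ ∧ T.dist u v₁ + 1 = T.dist u v))) ∧
    (NCG.IsStrongCriticalPair st H v u v₁ v₂ u' →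
      ∃ T : SimpleGraph V, NCG.IsSPT (NCG.graph st) u T ∧ ¬ T.Adj v v₂) :=
  critical_pair_spt_rooted_at_u_general st hself hconn H v u v₁ v₂ u' hcp
end

section
/- Let H be a biconnected graph. Then for every edge e of H there exists a min cycle of H that contains the edge e, i.e., a cycle C containing e such that for every two vertices x, x' of C the distance between x and x' along C equals their distance in H. -/
open scoped BigOperators

/-!
An edge `ab` of a graph with at least three vertices and no cut vertex is not a bridge: `a` has a
neighbour `c ≠ b`, and `c` reaches `b` avoiding `a`. So `ab` lies on a cycle; let `C` be a shortest
one. For `x, y` on `C` we show `d_C(x, y) ≤ d(x, y)` by induction on `d(x, y)`. A shortest `x`–`y`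
path either meets `C` at an inner vertex `z`, and the induction hypothesis applies to `(x, z)` and
`(z, y)`; or it meets `C` only at `x` and `y`, and then, were it shorter than both arcs of `C`
between `x` and `y`, swapping it for the arc not containing `ab` would give a shorter cycle through
`ab`.
-/

namespace SimpleGraph

variable {V : Type*} {G : SimpleGraph V}

lemma exists_adj_ne_of_connected_induce_compl [Fintype V] (h3 : 3 ≤ Fintype.card V) {a b : V}
    (hb : (G.induce {b}ᶜ).Connected) (hab : a ≠ b) : ∃ c, G.Adj a c ∧ c ≠ b := by
  classical
  obtain ⟨z, -, hz⟩ := Finset.exists_mem_notMem_of_card_lt_card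
    (s := {a, b}) (t := Finset.univ)
    (Finset.card_le_two.trans_lt (by rw [Finset.card_univ]; omega))
  simp only [Finset.mem_insert, Finset.mem_singleton, not_or] at hz
  obtain ⟨p⟩ := hb ⟨a, hab⟩ ⟨z, hz.2⟩
  have hp : ¬ p.Nil := Walk.not_nil_of_ne fun h => hz.1 (congrArg Subtype.val h).symm
  exact ⟨p.snd, p.adj_snd hp, p.snd.2⟩

lemma exists_isCycle_mem_edges_of_connected_induce_compl [Fintype V]
    (h3 : 3 ≤ Fintype.card V) (hnocut : ∀ x, (G.induce {x}ᶜ).Connected) {e : Sym2 V}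
    (he : e ∈ G.edgeSet) : ∃ (u : V) (p : G.Walk u u), p.IsCycle ∧ e ∈ p.edges := by
  induction e using Sym2.ind with | _ a b =>
  obtain ⟨c, hac, hcb⟩ := exists_adj_ne_of_connected_induce_compl h3 (hnocut b) he.ne
  let f : G.induce {a}ᶜ →g G.deleteEdges {s(a, b)} :=
    ⟨Subtype.val, fun {u v} huv => deleteEdges_adj.mpr ⟨huv, fun h => by
      rcases Sym2.eq_iff.mp (Set.mem_singleton_iff.mp h) with ⟨hu, -⟩ | ⟨-, hv⟩
      exacts [u.2 hu, v.2 hv]⟩⟩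
  have hcb_reach : (G.deleteEdges {s(a, b)}).Reachable c b :=
    (hnocut a ⟨c, hac.ne'⟩ ⟨b, he.ne'⟩).map f
  have hac' : (G.deleteEdges {s(a, b)}).Adj a c :=
    deleteEdges_adj.mpr ⟨hac, by simp [hcb, he.ne]⟩
  exact adj_and_reachable_delete_edges_iff_exists_cycle.mp ⟨he, hac'.reachable.trans hcb_reach⟩

lemma Subgraph.coe_dist_le_length {H : G.Subgraph} {u v : V} (p : G.Walk u v)
    (hp : p.toSubgraph ≤ H) (hu : u ∈ H.verts) (hv : v ∈ H.verts) :
    H.coe.dist ⟨u, hu⟩ ⟨v, hv⟩ ≤ p.length := by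
  have hl : p.mapToSubgraph.length = p.length := by
    have := congrArg Walk.length p.map_mapToSubgraph_hom
    rwa [Walk.length_map] at this
  exact (dist_le (p.mapToSubgraph.map (Subgraph.inclusion hp))).trans_eq
    (by rw [Walk.length_map, hl])

lemma Subgraph.dist_le_coe_dist {H : G.Subgraph} {u v : H.verts} (h : H.coe.Reachable u v) :
    G.dist u v ≤ H.coe.dist u v := by
  obtain ⟨p, hp⟩ := h.exists_walk_length_eq_dist
  exact (dist_le (p.map H.hom)).trans_eq (by rw [Walk.length_map, hp])

namespace Walk

lemma IsPath.isCycle_append_of_length_lt {x y : V} {A : G.Walk x y} {Q : G.Walk y x}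
    (hA : A.IsPath) (hQ : Q.IsPath) (hxy : x ≠ y) (hlen : Q.length < A.length)
    (hAQ : ∀ z ∈ A.support, z ∈ Q.support → z = x ∨ z = y) : (A.append Q).IsCycle := by
  refine hA.isCycle_append hQ (fun z hzA hzQ => ?_) (Or.inl ?_)
  · have hA' := hA.support_nodup
    have hQ' := hQ.support_nodup
    rw [← cons_tail_support, List.nodup_cons] at hA' hQ'
    rcases hAQ z (List.mem_of_mem_tail hzA) (List.mem_of_mem_tail hzQ) with rfl | rfl
    · exact hA'.1 hzA
    · exact hQ'.1 hzQ
  · have : Q.length ≠ 0 := fun h => hxy (Q.eq_of_length_eq_zero h).symm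
    omega

lemma IsCycle.exists_shorter_of_shortcut {a x y : V} {C : G.Walk a a} (hC : C.IsCycle)
    {e : Sym2 V} (he : e ∈ C.edges)
    (hx : x ∈ C.toSubgraph.verts) (hy : y ∈ C.toSubgraph.verts)
    {Q : G.Walk x y} (hQ : Q.IsPath)
    (hQC : ∀ z ∈ Q.support, z ∈ C.toSubgraph.verts → z = x ∨ z = y)
    (hlt : Q.length < C.toSubgraph.coe.dist ⟨x, hx⟩ ⟨y, hy⟩) :
    ∃ (b : V) (C' : G.Walk b b), C'.IsCycle ∧ e ∈ C'.edges ∧ C'.length < C.length := by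
  classical
  have hxy : x ≠ y := by rintro rfl; simp at hlt
  have hxC := C.mem_verts_toSubgraph.mp hx
  set R := C.rotate x hxC
  have hR : R.IsCycle := hC.rotate hxC
  have hyR : y ∈ R.support := by rw [← mem_verts_toSubgraph, C.toSubgraph_rotate]; exact hy
  set A := R.takeUntil y hyR
  set B := R.dropUntil y hyR
  have hAB : A.append B = R := R.take_spec hyR
  have hA : A.IsPath := hR.isPath_takeUntil hyR
  have hB : B.IsPath := (hAB ▸ hR).isPath_of_append_right (not_nil_of_ne hxy)
  have hRC : A.toSubgraph ⊔ B.toSubgraph = C.toSubgraph := by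
    rw [← toSubgraph_append, hAB, C.toSubgraph_rotate]
  have hAC : A.toSubgraph ≤ C.toSubgraph := hRC ▸ le_sup_left
  have hBC : B.toSubgraph ≤ C.toSubgraph := hRC ▸ le_sup_right
  have hQA : Q.length < A.length := hlt.trans_le (Subgraph.coe_dist_le_length A hAC hx hy)
  have hQB : Q.length < B.length := by
    rw [dist_comm] at hlt
    exact hlt.trans_le (Subgraph.coe_dist_le_length B hBC hy hx)
  have hlen : C.length = A.length + B.length := by
    rw [← length_append, hAB]
    exact (C.length_rotate x hxC).symm
  have heAB : e ∈ A.edges ∨ e ∈ B.edges := by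
    rw [← List.mem_append, ← edges_append, hAB]
    exact (C.rotate_edges x hxC).perm.mem_iff.mpr he
  rcases heAB with heA | heB
  · refine ⟨x, A.append Q.reverse, hA.isCycle_append_of_length_lt hQ.reverse hxy (by simpa) ?_,
      by simp [heA], by simp; omega⟩
    intro z hzA hzQ
    exact hQC z (by simpa using hzQ) (hAC.1 (A.mem_verts_toSubgraph.mpr hzA))
  · refine ⟨y, B.append Q, hB.isCycle_append_of_length_lt hQ hxy.symm hQB ?_,
      by simp [heB], by simp; omega⟩
    intro z hzB hzQ
    exact (hQC z hzQ (hBC.1 (B.mem_verts_toSubgraph.mpr hzB))).symm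

lemma IsCycle.isMinCycle_of_forall_length_le {a : V} {C : G.Walk a a} (hC : C.IsCycle)
    {e : Sym2 V} (he : e ∈ C.edges)
    (hmin : ∀ (b : V) (C' : G.Walk b b),
      C'.IsCycle → e ∈ C'.edges → C.length ≤ C'.length) :
    NCG.IsMinCycle G C := by
  classical
  have hconn : C.toSubgraph.coe.Connected := C.toSubgraph_connected
  suffices key : ∀ n x (hx : x ∈ C.toSubgraph.verts) y (hy : y ∈ C.toSubgraph.verts),
      G.dist x y = n → C.toSubgraph.coe.dist ⟨x, hx⟩ ⟨y, hy⟩ ≤ n from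
    ⟨hC, fun x hx y hy =>
      (key _ x hx y hy rfl).antisymm (Subgraph.dist_le_coe_dist (hconn ⟨x, hx⟩ ⟨y, hy⟩))⟩
  intro n
  induction n using Nat.strong_induction_on with | _ n ih =>
  intro x hx y hy hn
  obtain ⟨Q, hQ⟩ : ∃ Q : G.Walk x y, Q.length = G.dist x y :=
    ((hconn ⟨x, hx⟩ ⟨y, hy⟩).map C.toSubgraph.hom).exists_walk_length_eq_dist
  by_cases hQC : ∀ z ∈ Q.support, z ∈ C.toSubgraph.verts → z = x ∨ z = y
  · by_contra! hlt
    obtain ⟨b, C', hC', heC', hlen⟩ := hC.exists_shorter_of_shortcut he hx hy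
      (Q.isPath_of_length_eq_dist hQ) hQC (by omega)
    exact (hmin b C' hC' heC').not_gt hlen
  push Not at hQC
  obtain ⟨z, hzQ, hz, hzx, hzy⟩ := hQC
  have hsplit : (Q.takeUntil z hzQ).length + (Q.dropUntil z hzQ).length = n := by
    rw [← length_append, Q.take_spec hzQ, hQ, hn]
  have hxz_pos : (Q.takeUntil z hzQ).length ≠ 0 := fun h => hzx (eq_of_length_eq_zero h).symm
  have hzy_pos : (Q.dropUntil z hzQ).length ≠ 0 := fun h => hzy (eq_of_length_eq_zero h)
  have hdxz := dist_le (Q.takeUntil z hzQ)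
  have hdzy := dist_le (Q.dropUntil z hzQ)
  calc C.toSubgraph.coe.dist ⟨x, hx⟩ ⟨y, hy⟩
      ≤ C.toSubgraph.coe.dist ⟨x, hx⟩ ⟨z, hz⟩ +
          C.toSubgraph.coe.dist ⟨z, hz⟩ ⟨y, hy⟩ := hconn.dist_triangle
    _ ≤ G.dist x z + G.dist z y :=
        add_le_add (ih _ (by omega) x hx z hz rfl) (ih _ (by omega) z hz y hy rfl)
    _ ≤ n := by omega

end Walk

end SimpleGraph

theorem exists_min_cycle_through_edge_general {W : Type*} [Fintype W]
    (H : SimpleGraph W)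
    (hcard : 3 ≤ Fintype.card W)
    (hnocut : ∀ x : W, (H.induce ({x}ᶜ : Set W)).Connected) :
    ∀ e ∈ H.edgeSet, ∃ (a : W) (c : H.Walk a a), NCG.IsMinCycle H c ∧ e ∈ c.edges := by
  intro e he
  obtain ⟨a₀, C₀, hC₀, heC₀⟩ :=
    SimpleGraph.exists_isCycle_mem_edges_of_connected_induce_compl hcard hnocut he
  classical
  let HasCycleOfLength (n : ℕ) :=
    ∃ (a : W) (c : H.Walk a a), c.IsCycle ∧ e ∈ c.edges ∧ c.length = n
  have hex : ∃ n, HasCycleOfLength n := ⟨_, a₀, C₀, hC₀, heC₀, rfl⟩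
  obtain ⟨a, C, hC, heC, hlen⟩ := Nat.find_spec hex
  refine ⟨a, C, hC.isMinCycle_of_forall_length_le heC fun b C' hC' heC' => ?_, heC⟩
  exact hlen ▸ Nat.find_min' hex ⟨b, C', hC', heC', rfl⟩

/-- In a biconnected graph `H` every edge lies on a min cycle. -/
theorem exists_min_cycle_through_edge {W : Type*} [Fintype W] [DecidableEq W]
    (H : SimpleGraph W)
    (hcard : 3 ≤ Fintype.card W)
    (hconn : H.Connected)
    (hnocut : ∀ x : W, (H.induce ({x}ᶜ : Set W)).Connected) :
    ∀ e ∈ H.edgeSet, ∃ (a : W) (c : H.Walk a a), NCG.IsMinCycle H c ∧ e ∈ c.edges :=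
  exists_min_cycle_through_edge_general H hcard hnocut
end
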